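/- arXiv:2301.01012 — 2 statements merged into one kernel-verified Lean document; each statement's English description precedes it below -/
import Mathlib

section
/- Let λ₁(D, f) denote the principal eigenvalue of the Neumann eigenvalue problem -D φ'' + f(x) φ = λ φ on (0, L) with φ'(0) = φ'(L) = 0, where f ∈ C([0,L]). Then λ₁(D, f) → min_{x∈[0,L]} f(x) as D → 0⁺. -/
/-- The principal eigenvalue of the Neumann problem `-D φ'' + f φ = λ φ` on `(0, L)`,
characterized variationally as the infimum of the Rayleigh quotient over normalized
test functions. -/
noncomputable def principalEigenvalue (L D : ℝ) (f : ℝ → ℝ) : ℝ :=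
  sInf { r : ℝ | ∃ φ φ' : ℝ → ℝ,
    (∀ x ∈ Set.Icc (0:ℝ) L, HasDerivWithinAt φ (φ' x) (Set.Icc (0:ℝ) L) x) ∧
    ContinuousOn φ' (Set.Icc (0:ℝ) L) ∧
    (∫ x in (0:ℝ)..L, (φ x) ^ 2) = 1 ∧
    r = ∫ x in (0:ℝ)..L, (D * (φ' x) ^ 2 + f x * (φ x) ^ 2) }

open Set Filter Topology intervalIntegral

/-!
Since `D ∫ φ'² ≥ 0` and `∫ φ² = 1`, every Rayleigh quotient is at least `m = min_{[0,L]} f`.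
Conversely, a normalized smooth bump concentrated near a minimum point `x₀` of `f` has
`∫ f φ² ≤ m + ε`, and its quotient `D ∫ φ'² + ∫ f φ²` tends to `∫ f φ²` as `D → 0`.
-/

def rayleighQuotients (L D : ℝ) (f : ℝ → ℝ) : Set ℝ :=
  { r : ℝ | ∃ φ φ' : ℝ → ℝ,
    (∀ x ∈ Set.Icc (0:ℝ) L, HasDerivWithinAt φ (φ' x) (Set.Icc (0:ℝ) L) x) ∧
    ContinuousOn φ' (Set.Icc (0:ℝ) L) ∧
    (∫ x in (0:ℝ)..L, (φ x) ^ 2) = 1 ∧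
    r = ∫ x in (0:ℝ)..L, (D * (φ' x) ^ 2 + f x * (φ x) ^ 2) }

theorem principalEigenvalue_eq_sInf (L D : ℝ) (f : ℝ → ℝ) :
    principalEigenvalue L D f = sInf (rayleighQuotients L D f) :=
  rfl

variable {L D m : ℝ} {f : ℝ → ℝ}

theorem rayleighQuotients_nonempty (hL : 0 < L) : (rayleighQuotients L D f).Nonempty := by
  refine ⟨_, fun _ => (√L)⁻¹, fun _ => 0, fun x _ => hasDerivWithinAt_const _ _ _,
    continuousOn_const, ?_, rfl⟩
  rw [integral_const, smul_eq_mul, inv_pow, Real.sq_sqrt hL.le, sub_zero, mul_inv_cancel₀ hL.ne']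

theorem mem_lowerBounds_rayleighQuotients (hL : 0 ≤ L) (hD : 0 ≤ D)
    (hf : ContinuousOn f (Icc 0 L)) (hm : ∀ x ∈ Icc 0 L, m ≤ f x) :
    m ∈ lowerBounds (rayleighQuotients L D f) := by
  rintro _ ⟨φ, φ', hφ, hφ', hnorm, rfl⟩
  have hφc : ContinuousOn φ (Icc 0 L) := fun x hx => (hφ x hx).continuousWithinAt
  calc m = ∫ x in (0:ℝ)..L, m * φ x ^ 2 := by rw [integral_const_mul, hnorm, mul_one]
    _ ≤ ∫ x in (0:ℝ)..L, (D * φ' x ^ 2 + f x * φ x ^ 2) := by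
      refine integral_mono_on hL ?_ ?_ fun x hx => ?_
      · exact (continuousOn_const.mul (hφc.pow 2)).intervalIntegrable_of_Icc hL
      · exact ((continuousOn_const.mul (hφ'.pow 2)).add
          (hf.mul (hφc.pow 2))).intervalIntegrable_of_Icc hL
      · nlinarith [mul_le_mul_of_nonneg_right (hm x hx) (sq_nonneg (φ x)),
          mul_nonneg hD (sq_nonneg (φ' x))]

theorem le_principalEigenvalue (hL : 0 < L) (hD : 0 ≤ D)
    (hf : ContinuousOn f (Icc 0 L)) (hm : ∀ x ∈ Icc 0 L, m ≤ f x) :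
    m ≤ principalEigenvalue L D f := by
  rw [principalEigenvalue_eq_sInf]
  exact le_csInf (rayleighQuotients_nonempty hL) (mem_lowerBounds_rayleighQuotients hL.le hD hf hm)

theorem principalEigenvalue_le (hL : 0 ≤ L) (hD : 0 ≤ D)
    (hf : ContinuousOn f (Icc 0 L)) (hm : ∀ x ∈ Icc 0 L, m ≤ f x)
    {φ : ℝ → ℝ} (hφ : ContDiff ℝ 1 φ) (hnorm : ∫ x in (0:ℝ)..L, φ x ^ 2 = 1) :
    principalEigenvalue L D f ≤
      D * (∫ x in (0:ℝ)..L, deriv φ x ^ 2) + ∫ x in (0:ℝ)..L, f x * φ x ^ 2 := by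
  have hφ' : Continuous (deriv φ) := hφ.continuous_deriv le_rfl
  have hmem :
      ∫ x in (0:ℝ)..L, (D * deriv φ x ^ 2 + f x * φ x ^ 2) ∈ rayleighQuotients L D f :=
    ⟨φ, deriv φ, fun x _ => ((hφ.differentiable one_ne_zero) x).hasDerivAt.hasDerivWithinAt,
      hφ'.continuousOn, hnorm, rfl⟩
  rw [integral_add (f := fun x => D * deriv φ x ^ 2) (g := fun x => f x * φ x ^ 2)
    ((continuous_const.mul (hφ'.pow 2)).intervalIntegrable _ _)
    ((hf.mul (hφ.continuous.pow 2).continuousOn).intervalIntegrable_of_Icc hL),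
    integral_const_mul] at hmem
  rw [principalEigenvalue_eq_sInf]
  exact csInf_le ⟨m, mem_lowerBounds_rayleighQuotients hL hD hf hm⟩ hmem

theorem exists_contDiff_support_subset_ball_integral_sq_eq_one {a b c r : ℝ} (hab : a < b)
    (hc : c ∈ Icc a b) (hr : 0 < r) :
    ∃ φ : ℝ → ℝ, ContDiff ℝ 1 φ ∧ Function.support φ ⊆ Metric.ball c r ∧
      ∫ x in a..b, φ x ^ 2 = 1 := by
  let ψ : ContDiffBump c := ⟨r / 2, r, half_pos hr, half_lt_self hr⟩
  set N := ∫ x in a..b, ψ x ^ 2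
  have hN : 0 < N := integral_pos hab (ψ.continuous.pow 2).continuousOn
    (fun x _ => sq_nonneg _) ⟨c, hc, pow_pos (ψ.pos_of_mem_ball (Metric.mem_ball_self hr)) 2⟩
  refine ⟨fun x => ψ x / √N, ψ.contDiff.div_const _, ?_, ?_⟩
  · intro x hx
    rw [← ψ.support_eq]
    exact fun hψ => hx (by simp [hψ])
  · simp_rw [div_pow, Real.sq_sqrt hN.le]
    rw [integral_div, div_self hN.ne']

theorem exists_contDiff_integral_sq_eq_one_integral_mul_sq_le {a b x₀ ε : ℝ} (hab : a < b)
    (hf : ContinuousOn f (Icc a b)) (hx₀ : x₀ ∈ Icc a b) (hε : 0 < ε) :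
    ∃ φ : ℝ → ℝ, ContDiff ℝ 1 φ ∧ ∫ x in a..b, φ x ^ 2 = 1 ∧
      ∫ x in a..b, f x * φ x ^ 2 ≤ f x₀ + ε := by
  obtain ⟨δ, hδ, hfδ⟩ := Metric.continuousWithinAt_iff.1 (hf x₀ hx₀) ε hε
  obtain ⟨φ, hφ, hsupp, hnorm⟩ :=
    exists_contDiff_support_subset_ball_integral_sq_eq_one hab hx₀ hδ
  refine ⟨φ, hφ, hnorm, ?_⟩
  calc ∫ x in a..b, f x * φ x ^ 2 ≤ ∫ x in a..b, (f x₀ + ε) * φ x ^ 2 := by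
        refine integral_mono_on hab.le ?_ ?_ fun x hx => ?_
        · exact (hf.mul (hφ.continuous.pow 2).continuousOn).intervalIntegrable_of_Icc hab.le
        · exact (continuous_const.mul (hφ.continuous.pow 2)).intervalIntegrable _ _
        · by_cases hφx : φ x = 0
          · simp [hφx]
          · have := hfδ hx (hsupp hφx)
            rw [Real.dist_eq, abs_lt] at this
            exact mul_le_mul_of_nonneg_right (by linarith) (sq_nonneg _)
    _ = f x₀ + ε := by rw [integral_const_mul, hnorm, mul_one]

theorem stmt_13 (L : ℝ) (hL : 0 < L) (f : ℝ → ℝ)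
    (hf : ContinuousOn f (Set.Icc (0:ℝ) L)) :
    Filter.Tendsto (fun D => principalEigenvalue L D f)
      (nhdsWithin 0 (Set.Ioi (0:ℝ))) (nhds (sInf (f '' Set.Icc (0:ℝ) L))) := by
  set m := sInf (f '' Icc 0 L)
  have hcompact : IsCompact (f '' Icc 0 L) := isCompact_Icc.image_of_continuousOn hf
  obtain ⟨x₀, hx₀, hfx₀⟩ : m ∈ f '' Icc 0 L :=
    hcompact.sInf_mem ((nonempty_Icc.2 hL.le).image f)
  have hm : ∀ x ∈ Icc 0 L, m ≤ f x := fun x hx =>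
    csInf_le hcompact.bddBelow (mem_image_of_mem f hx)
  refine tendsto_order.2 ⟨fun a ha => ?_, fun b hb => ?_⟩
  · filter_upwards [self_mem_nhdsWithin] with D hD
    exact ha.trans_le (le_principalEigenvalue hL (le_of_lt hD) hf hm)
  · obtain ⟨φ, hφ, hnorm, hfφ⟩ :=
      exists_contDiff_integral_sq_eq_one_integral_mul_sq_le hL hf hx₀ (half_pos (sub_pos.2 hb))
    set C := ∫ x in (0:ℝ)..L, deriv φ x ^ 2
    set I := ∫ x in (0:ℝ)..L, f x * φ x ^ 2
    have hlim : Tendsto (fun D => D * C + I) (𝓝[>] 0) (𝓝 I) := by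
      simpa using (((tendsto_id (x := 𝓝 (0:ℝ))).mul_const C).add_const I).mono_left
        nhdsWithin_le_nhds
    filter_upwards [self_mem_nhdsWithin, hlim.eventually (gt_mem_nhds (by linarith : I < b))]
      with D hD hlt
    exact (principalEigenvalue_le hL.le (le_of_lt hD) hf hm hφ hnorm).trans_lt hlt
end

section
/- Let h ∈ C²([0,L]) with h'(0) ≥ 0, h'(L) ≤ 0 and -d_S h'' ≤ Λ - h on (0,L), and suppose 0 < h < Λ on [0,L]. Let Ŝ ∈ C²([a,b]) for some [a,b] ⊆ [0,L] solve -d_S Ŝ'' = Λ - Ŝ on (a,b), with the boundary condition at each endpoint being either Ŝ = h or Ŝ' = 0 (and Ŝ' = 0 only allowed at endpoints that coincide with 0 or L). If Ŝ ≤ Λ on [a,b], then Ŝ ≥ h on [a,b]. -/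
lemma push_right_aux (dS a b c : ℝ) (hdS : 0 < dS)
    (hca : a ≤ c) (hcb : c < b)
    (w w' w'' : ℝ → ℝ)
    (hw1 : ∀ x ∈ Set.Icc a b, HasDerivWithinAt w (w' x) (Set.Icc a b) x)
    (hw2 : ∀ x ∈ Set.Icc a b, HasDerivWithinAt w' (w'' x) (Set.Icc a b) x)
    (hineq : ∀ x ∈ Set.Ioo a b, w x ≤ dS * w'' x)
    (hmax : ∀ x ∈ Set.Icc a b, w x ≤ w c)
    (hpos : 0 < w c) (hd : 0 ≤ w' c) : False := by
  have hcmem : c ∈ Set.Icc a b := ⟨hca, hcb.le⟩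
  have hwcont : ContinuousWithinAt w (Set.Icc a b) c := (hw1 c hcmem).continuousWithinAt
  have hev : w ⁻¹' Set.Ioi 0 ∈ nhdsWithin c (Set.Icc a b) := hwcont (Ioi_mem_nhds hpos)
  rw [Metric.mem_nhdsWithin_iff] at hev
  obtain ⟨ε, hε, hball⟩ := hev
  set d := min (c + ε) b with hdd
  have hcd : c < d := lt_min (by linarith) hcb
  have hdb : d ≤ b := min_le_right _ _
  have hsub : Set.Icc c d ⊆ Set.Icc a b := Set.Icc_subset_Icc hca hdb
  have hwpos : ∀ x ∈ Set.Ioo c d, 0 < w x := by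
    intro x hx
    have hx1 : x ∈ Set.Icc a b := ⟨by linarith [hx.1], by linarith [hx.2, hdb]⟩
    have hx2 : x ∈ Metric.ball c ε := by
      rw [Metric.mem_ball, Real.dist_eq, abs_of_pos (by linarith [hx.1])]
      have : x < c + ε := lt_of_lt_of_le hx.2 (min_le_left _ _)
      linarith
    exact hball ⟨hx2, hx1⟩
  have hkey : ∀ x ∈ Set.Ioo c d,
      HasDerivAt w' (w'' x) x ∧ HasDerivAt w (w' x) x ∧ 0 < w'' x := by
    intro x hx
    have hmem : x ∈ Set.Icc a b := ⟨by linarith [hx.1], by linarith [hx.2, hdb]⟩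
    have hnb : Set.Icc a b ∈ nhds x :=
      Icc_mem_nhds (by linarith [hx.1]) (by linarith [hx.2, hdb])
    have h1 := hineq x ⟨by linarith [hx.1], by linarith [hx.2, hdb]⟩
    have h2 := hwpos x hx
    refine ⟨(hw2 x hmem).hasDerivAt hnb, (hw1 x hmem).hasDerivAt hnb, ?_⟩
    nlinarith
  have hmono' : StrictMonoOn w' (Set.Icc c d) := by
    apply strictMonoOn_of_deriv_pos (convex_Icc c d)
    · exact fun x hx => ((hw2 x (hsub hx)).continuousWithinAt).mono hsub
    · intro x hx
      rw [interior_Icc] at hx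
      rw [(hkey x hx).1.deriv]
      exact (hkey x hx).2.2
  have hmono : StrictMonoOn w (Set.Icc c d) := by
    apply strictMonoOn_of_deriv_pos (convex_Icc c d)
    · exact fun x hx => ((hw1 x (hsub hx)).continuousWithinAt).mono hsub
    · intro x hx
      rw [interior_Icc] at hx
      rw [(hkey x hx).2.1.deriv]
      have := hmono' (Set.left_mem_Icc.mpr hcd.le) ⟨hx.1.le, hx.2.le⟩ hx.1
      linarith
  have h1 : w c < w d :=
    hmono (Set.left_mem_Icc.mpr hcd.le) (Set.right_mem_Icc.mpr hcd.le) hcd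
  have h2 : w d ≤ w c := hmax d (hsub (Set.right_mem_Icc.mpr hcd.le))
  linarith

lemma push_left_aux (dS a b c : ℝ) (hdS : 0 < dS)
    (hca : a < c) (hcb : c ≤ b)
    (w w' w'' : ℝ → ℝ)
    (hw1 : ∀ x ∈ Set.Icc a b, HasDerivWithinAt w (w' x) (Set.Icc a b) x)
    (hw2 : ∀ x ∈ Set.Icc a b, HasDerivWithinAt w' (w'' x) (Set.Icc a b) x)
    (hineq : ∀ x ∈ Set.Ioo a b, w x ≤ dS * w'' x)
    (hmax : ∀ x ∈ Set.Icc a b, w x ≤ w c)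
    (hpos : 0 < w c) (hd : w' c ≤ 0) : False := by
  have hcmem : c ∈ Set.Icc a b := ⟨hca.le, hcb⟩
  have hwcont : ContinuousWithinAt w (Set.Icc a b) c := (hw1 c hcmem).continuousWithinAt
  have hev : w ⁻¹' Set.Ioi 0 ∈ nhdsWithin c (Set.Icc a b) := hwcont (Ioi_mem_nhds hpos)
  rw [Metric.mem_nhdsWithin_iff] at hev
  obtain ⟨ε, hε, hball⟩ := hev
  set d := max (c - ε) a with hdd
  have hcd : d < c := max_lt (by linarith) hca
  have hdb : a ≤ d := le_max_right _ _
  have hsub : Set.Icc d c ⊆ Set.Icc a b := Set.Icc_subset_Icc hdb hcb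
  have hwpos : ∀ x ∈ Set.Ioo d c, 0 < w x := by
    intro x hx
    have hx1 : x ∈ Set.Icc a b := ⟨by linarith [hx.1, hdb], by linarith [hx.2]⟩
    have hx2 : x ∈ Metric.ball c ε := by
      rw [Metric.mem_ball, Real.dist_eq, abs_of_neg (by linarith [hx.2])]
      have : c - ε < x := lt_of_le_of_lt (le_max_left _ _) hx.1
      linarith
    exact hball ⟨hx2, hx1⟩
  have hkey : ∀ x ∈ Set.Ioo d c,
      HasDerivAt w' (w'' x) x ∧ HasDerivAt w (w' x) x ∧ 0 < w'' x := by
    intro x hx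
    have hmem : x ∈ Set.Icc a b := ⟨by linarith [hx.1, hdb], by linarith [hx.2]⟩
    have hnb : Set.Icc a b ∈ nhds x :=
      Icc_mem_nhds (by linarith [hx.1, hdb]) (by linarith [hx.2])
    have h1 := hineq x ⟨by linarith [hx.1, hdb], by linarith [hx.2]⟩
    have h2 := hwpos x hx
    refine ⟨(hw2 x hmem).hasDerivAt hnb, (hw1 x hmem).hasDerivAt hnb, ?_⟩
    nlinarith
  have hmono' : StrictMonoOn w' (Set.Icc d c) := by
    apply strictMonoOn_of_deriv_pos (convex_Icc d c)
    · exact fun x hx => ((hw2 x (hsub hx)).continuousWithinAt).mono hsub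
    · intro x hx
      rw [interior_Icc] at hx
      rw [(hkey x hx).1.deriv]
      exact (hkey x hx).2.2
  have hanti : StrictAntiOn w (Set.Icc d c) := by
    apply strictAntiOn_of_deriv_neg (convex_Icc d c)
    · exact fun x hx => ((hw1 x (hsub hx)).continuousWithinAt).mono hsub
    · intro x hx
      rw [interior_Icc] at hx
      rw [(hkey x hx).2.1.deriv]
      have := hmono' ⟨hx.1.le, hx.2.le⟩ (Set.right_mem_Icc.mpr hcd.le) hx.2
      linarith
  have h1 : w c < w d :=
    hanti (Set.left_mem_Icc.mpr hcd.le) (Set.right_mem_Icc.mpr hcd.le) hcd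
  have h2 : w d ≤ w c := hmax d (hsub (Set.left_mem_Icc.mpr hcd.le))
  linarith

theorem stmt_18 (dS Λ L a b : ℝ) (hdS : 0 < dS) (hΛ : 0 < Λ) (hL : 0 < L)
    (ha : 0 ≤ a) (hb : b ≤ L) (hab : a ≤ b)
    (h h' h'' : ℝ → ℝ)
    (hh1 : ∀ x ∈ Set.Icc (0:ℝ) L, HasDerivWithinAt h (h' x) (Set.Icc (0:ℝ) L) x)
    (hh2 : ∀ x ∈ Set.Icc (0:ℝ) L, HasDerivWithinAt h' (h'' x) (Set.Icc (0:ℝ) L) x)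
    (hh3 : ContinuousOn h'' (Set.Icc (0:ℝ) L))
    (hh'0 : 0 ≤ h' 0) (hh'L : h' L ≤ 0)
    (hsub : ∀ x ∈ Set.Ioo (0:ℝ) L, -dS * h'' x ≤ Λ - h x)
    (hhpos : ∀ x ∈ Set.Icc (0:ℝ) L, 0 < h x)
    (hhΛ : ∀ x ∈ Set.Icc (0:ℝ) L, h x < Λ)
    (S S' S'' : ℝ → ℝ)
    (hS1 : ∀ x ∈ Set.Icc a b, HasDerivWithinAt S (S' x) (Set.Icc a b) x)
    (hS2 : ∀ x ∈ Set.Icc a b, HasDerivWithinAt S' (S'' x) (Set.Icc a b) x)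
    (hS3 : ContinuousOn S'' (Set.Icc a b))
    (hode : ∀ x ∈ Set.Ioo a b, -dS * S'' x = Λ - S x)
    (hbca : S a = h a ∨ (a = 0 ∧ S' a = 0))
    (hbcb : S b = h b ∨ (b = L ∧ S' b = 0))
    (hSΛ : ∀ x ∈ Set.Icc a b, S x ≤ Λ) :
    ∀ x ∈ Set.Icc a b, h x ≤ S x := by
  have hIcc : Set.Icc a b ⊆ Set.Icc (0:ℝ) L := Set.Icc_subset_Icc ha hb
  -- degenerate case a = b
  rcases eq_or_lt_of_le hab with heq | hab'
  · subst heq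
    intro x hx
    have hx' : x = a := le_antisymm hx.2 hx.1
    subst hx'
    rcases hbca with h1 | ⟨ha0, _⟩
    · exact h1.ge
    · rcases hbcb with h2 | ⟨hbL, _⟩
      · exact h2.ge
      · exact absurd (ha0 ▸ hbL) (by linarith)
  -- the difference function
  set w : ℝ → ℝ := fun x => h x - S x with hw
  set w' : ℝ → ℝ := fun x => h' x - S' x with hw'
  set w'' : ℝ → ℝ := fun x => h'' x - S'' x with hw''
  have hw1 : ∀ x ∈ Set.Icc a b, HasDerivWithinAt w (w' x) (Set.Icc a b) x :=
    fun x hx => ((hh1 x (hIcc hx)).mono hIcc).sub (hS1 x hx)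
  have hw2 : ∀ x ∈ Set.Icc a b, HasDerivWithinAt w' (w'' x) (Set.Icc a b) x :=
    fun x hx => ((hh2 x (hIcc hx)).mono hIcc).sub (hS2 x hx)
  have hineq : ∀ x ∈ Set.Ioo a b, w x ≤ dS * w'' x := by
    intro x hx
    have hx' : x ∈ Set.Ioo (0:ℝ) L := ⟨by linarith [hx.1], by linarith [hx.2]⟩
    have h1 := hsub x hx'
    have h2 := hode x hx
    simp only [hw, hw'']
    linarith
  -- maximum of w
  have hwcont : ContinuousOn w (Set.Icc a b) :=
    fun x hx => (hw1 x hx).continuousWithinAt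
  obtain ⟨x0, hx0mem, hx0max⟩ :=
    isCompact_Icc.exists_isMaxOn (Set.nonempty_Icc.mpr hab) hwcont
  have hmax : ∀ x ∈ Set.Icc a b, w x ≤ w x0 := fun x hx => hx0max hx
  by_cases hM : w x0 ≤ 0
  · intro x hx
    have := hmax x hx
    simp only [hw] at this hM
    linarith
  push_neg at hM
  exfalso
  rcases eq_or_lt_of_le hx0mem.1 with hxa | hxa
  · -- x0 = a
    rcases hbca with h1 | ⟨ha0, hS'a⟩
    · rw [← hxa] at hM
      simp only [hw, h1] at hM
      linarith
    · refine push_right_aux dS a b a hdS le_rfl hab' w w' w'' hw1 hw2 hineq ?_ ?_ ?_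
      · rw [← hxa] at hmax; exact hmax
      · rw [← hxa] at hM; exact hM
      · rw [ha0] at hS'a ⊢; simp only [hw', hS'a]; linarith
  rcases eq_or_lt_of_le hx0mem.2 with hxb | hxb
  · -- x0 = b
    rcases hbcb with h1 | ⟨hbL, hS'b⟩
    · rw [hxb] at hM
      simp only [hw, h1] at hM
      linarith
    · refine push_left_aux dS a b b hdS hab' le_rfl w w' w'' hw1 hw2 hineq ?_ ?_ ?_
      · rw [hxb] at hmax; exact hmax
      · rw [hxb] at hM; exact hM
      · rw [hbL] at hS'b ⊢; simp only [hw', hS'b]; linarith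
  -- interior maximum
  have hnb : Set.Icc a b ∈ nhds x0 := Icc_mem_nhds hxa hxb
  have hloc : IsLocalMax w x0 := hx0max.isLocalMax hnb
  have hder : HasDerivAt w (w' x0) x0 := (hw1 x0 hx0mem).hasDerivAt hnb
  have hzero : w' x0 = 0 := hloc.hasDerivAt_eq_zero hder
  exact push_right_aux dS a b x0 hdS hx0mem.1 hxb w w' w'' hw1 hw2 hineq hmax hM hzero.ge
end
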